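/- Let N be a positive integer with n decimal digits. Then ∑_{i=⌊N/10⌋}^{N} (1/i)·∑_{j=0}^{n−1} ⟨i/10^j⟩ = (log 10 / 2)·n + O(1); equivalently it equals (1/2)·log N + O(1). -/

import Mathlib

open Finset



lemma fract_nat_div (i q : ℕ) (hq : 0 < q) :
    Int.fract ((i:ℝ)/q) = ((i % q : ℕ):ℝ)/q := by
  conv_lhs => rw [← Nat.div_add_mod i q]
  have hq' : ((q:ℝ)) ≠ 0 := by positivity
  push_cast
  rw [add_div, mul_div_cancel_left₀ _ hq', Int.fract_natCast_add]
  refine Int.fract_eq_self.mpr ⟨by positivity, ?_⟩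
  rw [div_lt_one (by positivity)]
  exact_mod_cast Nat.mod_lt i hq

lemma Hform (q : ℕ) (hq : 0 < q) (t : ℕ) :
    ∑ i ∈ range t, (((i % q : ℕ):ℝ)/q - ((q:ℝ)-1)/(2*q))
      = ((t % q : ℕ):ℝ) * (((t % q : ℕ):ℝ) - q) / (2*q) := by
  have hq' : ((q:ℝ)) ≠ 0 := by positivity
  induction t with
  | zero => simp
  | succ t ih =>
    rw [sum_range_succ, ih]
    have hlt : t % q < q := Nat.mod_lt t hq
    have key : (t+1) % q = (t % q + 1) % q := by
      conv_lhs => rw [← Nat.div_add_mod t q]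
      rw [Nat.add_assoc, Nat.mul_add_mod]
    rcases eq_or_lt_of_le (Nat.succ_le_of_lt hlt) with h | h
    · have h1 : (t+1) % q = 0 := by rw [key, show t % q + 1 = q from h, Nat.mod_self]
      have h2 : ((t % q : ℕ) : ℝ) = (q:ℝ) - 1 := by
        have ht : t % q = q - 1 := by omega
        rw [ht, Nat.cast_sub hq, Nat.cast_one]
      rw [h1, h2, Nat.cast_zero]
      field_simp
      ring
    · have h1 : (t+1) % q = t % q + 1 := by rw [key, Nat.mod_eq_of_lt h]
      rw [h1]
      push_cast
      field_simp
      ring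


lemma Habs (q : ℕ) (hq : 0 < q) (t : ℕ) :
    |∑ i ∈ range t, (((i % q : ℕ):ℝ)/q - ((q:ℝ)-1)/(2*q))| ≤ (q:ℝ)/2 := by
  rw [Hform q hq t]
  have h1 : ((t % q : ℕ):ℝ) ≤ q := by exact_mod_cast (Nat.mod_lt t hq).le
  have h0 : (0:ℝ) ≤ ((t % q : ℕ):ℝ) := Nat.cast_nonneg _
  have hqp : (0:ℝ) < q := by exact_mod_cast hq
  rw [abs_div, abs_of_pos (by positivity : (0:ℝ) < 2*q), div_le_iff₀ (by positivity)]
  rw [abs_mul, abs_of_nonneg h0]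
  have : |((t % q : ℕ):ℝ) - q| ≤ q := by
    rw [abs_le]; constructor <;> nlinarith
  nlinarith [abs_nonneg (((t % q : ℕ):ℝ) - q)]

lemma partial_bound (q : ℕ) (hq : 0 < q) (a b : ℕ) :
    |∑ i ∈ Finset.Icc a b, (((i % q : ℕ):ℝ)/q - ((q:ℝ)-1)/(2*q))| ≤ (q:ℝ) := by
  rcases le_or_gt a b with hab | hab
  · rw [← Finset.Ico_add_one_right_eq_Icc, Finset.sum_Ico_eq_sub _ (by omega)]
    calc |_| ≤ |∑ i ∈ range (b+1), (((i % q : ℕ):ℝ)/q - ((q:ℝ)-1)/(2*q))|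
        + |∑ i ∈ range a, (((i % q : ℕ):ℝ)/q - ((q:ℝ)-1)/(2*q))| := abs_sub _ _
      _ ≤ (q:ℝ)/2 + (q:ℝ)/2 := add_le_add (Habs q hq _) (Habs q hq _)
      _ = q := by ring
  · rw [Finset.Icc_eq_empty (by omega)]
    simp [Nat.cast_nonneg]


lemma abel_bound (f : ℕ → ℝ) (M N : ℕ) (B : ℝ) (hM : 1 ≤ M) (hMN : M ≤ N)
    (hB : ∀ k, M ≤ k → k ≤ N → |∑ i ∈ Finset.Icc M k, f i| ≤ B) :
    |∑ i ∈ Finset.Icc M N, f i / i| ≤ B / M := by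
  have hB0 : 0 ≤ B := le_trans (abs_nonneg _) (hB M le_rfl hMN)
  set L := N + 1 - M with hL
  have hL1 : 1 ≤ L := by omega
  have hrw : ∑ i ∈ Finset.Icc M N, f i / i
      = ∑ i ∈ range L, (1/((M+i:ℕ):ℝ)) • f (M+i) := by
    rw [← Finset.Ico_add_one_right_eq_Icc, Finset.sum_Ico_eq_sum_range]
    simp [smul_eq_mul, div_eq_mul_inv, mul_comm, hL]
  rw [hrw, Finset.sum_range_by_parts]
  have hG : ∀ t, 1 ≤ t → t ≤ L → |∑ j ∈ range t, f (M+j)| ≤ B := by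
    intro t ht1 htL
    have : ∑ j ∈ range t, f (M+j) = ∑ i ∈ Finset.Icc M (M+t-1), f i := by
      rw [← Finset.Ico_add_one_right_eq_Icc, Finset.sum_Ico_eq_sum_range]
      have ht : M + t - 1 + 1 - M = t := by omega
      rw [ht]
    rw [this]
    exact hB _ (by omega) (by omega)
  have hML : M + L - 1 = N := by omega
  calc |(1/((M+(L-1):ℕ):ℝ)) • ∑ j ∈ range L, f (M+j)
        - ∑ i ∈ range (L-1), (1/((M+(i+1):ℕ):ℝ) - 1/((M+i:ℕ):ℝ)) • ∑ j ∈ range (i+1), f (M+j)|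
      ≤ |(1/((M+(L-1):ℕ):ℝ)) • ∑ j ∈ range L, f (M+j)|
        + |∑ i ∈ range (L-1), (1/((M+(i+1):ℕ):ℝ) - 1/((M+i:ℕ):ℝ)) • ∑ j ∈ range (i+1), f (M+j)| := abs_sub _ _
    _ ≤ (1/((N:ℕ):ℝ)) * B + ∑ i ∈ range (L-1), (1/((M+i:ℕ):ℝ) - 1/((M+(i+1):ℕ):ℝ)) * B := by
        gcongr ?_ + ?_
        · rw [smul_eq_mul, abs_mul]
          have h1 : M + (L-1) = N := by omega
          rw [h1]
          have : |(1/((N:ℕ):ℝ))| = 1/((N:ℕ):ℝ) := abs_of_nonneg (by positivity)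
          rw [this]
          exact mul_le_mul_of_nonneg_left (hG L hL1 le_rfl) (by positivity)
        · refine le_trans (Finset.abs_sum_le_sum_abs _ _) (Finset.sum_le_sum ?_)
          intro i hi
          rw [smul_eq_mul, abs_mul]
          have hpos : (0:ℝ) < ((M+i:ℕ):ℝ) := by positivity
          have hanti : (1:ℝ)/((M+(i+1):ℕ):ℝ) ≤ 1/((M+i:ℕ):ℝ) := by
            apply one_div_le_one_div_of_le hpos
            exact_mod_cast Nat.le_succ_of_le (le_refl (M+i)) |>.trans (by omega)
          have habs1 : |1/((M+(i+1):ℕ):ℝ) - 1/((M+i:ℕ):ℝ)| = 1/((M+i:ℕ):ℝ) - 1/((M+(i+1):ℕ):ℝ) := by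
            rw [abs_sub_comm]
            exact abs_of_nonneg (by linarith)
          rw [habs1]
          refine mul_le_mul_of_nonneg_left ?_ (by linarith)
          exact hG (i+1) (by omega) (by simp at hi; omega)
    _ = (1/((N:ℕ):ℝ)) * B + (1/((M:ℕ):ℝ) - 1/((M+(L-1):ℕ):ℝ)) * B := by
        rw [← Finset.sum_mul, Finset.sum_range_sub' (fun i => 1/((M+i:ℕ):ℝ))]
        norm_num
    _ ≤ B / M := by
        have h1 : M + (L-1) = N := by omega
        rw [h1]
        have hN0 : (0:ℝ) < ((N:ℕ):ℝ) := by
          have : 0 < N := by omega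
          exact_mod_cast this
        rw [div_eq_mul_inv B]
        ring_nf
        nlinarith [mul_nonneg (le_of_lt (inv_pos.mpr hN0)) hB0]


lemma log_succ_sub_le (x : ℝ) (hx : 1 ≤ x) : Real.log (x+1) - Real.log x ≤ 1/x := by
  have hx0 : 0 < x := by linarith
  rw [← Real.log_div (by positivity) (by positivity)]
  have := Real.log_le_sub_one_of_pos (show 0 < (x+1)/x by positivity)
  calc Real.log ((x+1)/x) ≤ (x+1)/x - 1 := this
    _ = 1/x := by field_simp; ring

lemma le_log_succ_sub (x : ℝ) (hx : 1 ≤ x) : 1/(x+1) ≤ Real.log (x+1) - Real.log x := by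
  have hx0 : 0 < x := by linarith
  have h := Real.log_le_sub_one_of_pos (show 0 < x/(x+1) by positivity)
  rw [Real.log_div (by positivity) (by positivity)] at h
  have : x/(x+1) - 1 = -(1/(x+1)) := by field_simp; ring
  rw [this] at h
  linarith

lemma tele (M L : ℕ) :
    ∑ i ∈ range L, (Real.log ((M:ℝ)+i+1) - Real.log ((M:ℝ)+i))
      = Real.log ((M:ℝ)+L) - Real.log M := by
  have h := Finset.sum_range_sub (fun k => Real.log ((M:ℝ)+k)) L
  push_cast at h
  rw [add_zero] at h
  rw [← h]
  refine (Finset.sum_congr rfl fun i _ => ?_).symm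
  ring_nf

lemma harm_ge (M N : ℕ) (hM : 1 ≤ M) (hMN : M ≤ N) :
    Real.log (N+1) - Real.log M ≤ ∑ i ∈ Finset.Icc M N, 1/(i:ℝ) := by
  have key : ∑ i ∈ Finset.Icc M N, (Real.log ((i:ℝ)+1) - Real.log i)
      ≤ ∑ i ∈ Finset.Icc M N, 1/(i:ℝ) := by
    refine Finset.sum_le_sum fun i hi => ?_
    have h1 : (1:ℝ) ≤ i := by
      have := (Finset.mem_Icc.mp hi).1; exact_mod_cast hM.trans this
    exact log_succ_sub_le _ h1
  refine le_trans (le_of_eq ?_) key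
  rw [← Finset.Ico_add_one_right_eq_Icc, Finset.sum_Ico_eq_sum_range]
  have hrw : ∀ i ∈ range (N+1-M), (Real.log ((↑(M+i):ℝ)+1) - Real.log (↑(M+i):ℝ))
      = (Real.log ((M:ℝ)+i+1) - Real.log ((M:ℝ)+i)) := by
    intro i _; push_cast; ring_nf
  rw [Finset.sum_congr rfl hrw, tele]
  have harg : (M:ℝ) + ((N+1-M:ℕ):ℝ) = (N:ℝ)+1 := by
    rw [Nat.cast_sub (by omega)]; push_cast; ring
  rw [harg]

lemma harm_le (M N : ℕ) (hM : 1 ≤ M) (hMN : M ≤ N) :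
    ∑ i ∈ Finset.Icc M N, 1/(i:ℝ) ≤ 1/M + (Real.log N - Real.log M) := by
  have hM0 : (0:ℝ) < M := by exact_mod_cast hM
  rw [Finset.Icc_eq_cons_Ioc hMN, Finset.sum_cons]
  gcongr 1/(M:ℝ) + ?_
  rw [← Finset.Ico_add_one_add_one_eq_Ioc, Finset.sum_Ico_eq_sum_range]
  have key : ∀ i ∈ range (N+1-(M+1)), 1/((↑(M+1+i)):ℝ)
      ≤ Real.log ((M:ℝ)+i+1) - Real.log ((M:ℝ)+i) := by
    intro i _
    have h1M : (1:ℝ) ≤ (M:ℝ) := by exact_mod_cast hM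
    have h1 : (1:ℝ) ≤ (M:ℝ)+i := by
      have : (0:ℝ) ≤ (i:ℝ) := Nat.cast_nonneg _
      linarith
    have := le_log_succ_sub ((M:ℝ)+i) h1
    calc 1/((↑(M+1+i)):ℝ) = 1/((M:ℝ)+i+1) := by push_cast; ring_nf
      _ ≤ Real.log ((M:ℝ)+i+1) - Real.log ((M:ℝ)+i) := this
  refine le_trans (Finset.sum_le_sum key) (le_of_eq ?_)
  rw [tele]
  have harg : (M:ℝ) + ((N+1-(M+1):ℕ):ℝ) = (N:ℝ) := by
    rw [Nat.cast_sub (by omega)]; push_cast; ring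
  rw [harg]


lemma nat_le_pow (n : ℕ) : n + 2 ≤ 2 * 10 ^ n := by
  induction n with
  | zero => norm_num
  | succ n ih =>
    have h : 1 ≤ 10^n := Nat.one_le_pow _ _ (by norm_num)
    calc n + 1 + 2 ≤ 2 * 10^n + 1 := by omega
      _ ≤ 2 * 10^(n+1) := by rw [pow_succ]; nlinarith

set_option maxHeartbeats 1000000 in
theorem stmt9 :
    ∃ C > (0:ℝ), ∀ N : ℕ, 10 ≤ N →
      |(∑ i ∈ Finset.Icc (N / 10) N,
          (1 / (i:ℝ)) * ∑ j ∈ Finset.range (Nat.digits 10 N).length,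
            Int.fract ((i:ℝ) / 10 ^ j)) -
        (Real.log 10 / 2) * ((Nat.digits 10 N).length : ℝ)| ≤ C := by
  refine ⟨100, by norm_num, fun N hN => ?_⟩
  set n := (Nat.digits 10 N).length with hn
  set M := N / 10 with hMdef
  clear_value n M
  -- basic numeric facts
  have hN0 : N ≠ 0 := by omega
  have hnN : N < 10 ^ n := by
    rw [hn]; exact Nat.lt_base_pow_length_digits (by norm_num)
  have hpow : 10 ^ n ≤ 10 * N := by
    rw [hn]; exact Nat.base_pow_length_digits_le 10 N (by norm_num) hN0
  have hn2 : 2 ≤ n := by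
    by_contra h
    push_neg at h
    have h2 : 10^n ≤ 10^1 := Nat.pow_le_pow_right (by norm_num) (by omega)
    have h3 : (10:ℕ)^1 = 10 := by norm_num
    omega
  have hM1 : 1 ≤ M := by omega
  have hMN : M ≤ N := by omega
  have h10M : 10 * M ≤ N := by omega
  have hN10M : N < 10 * M + 10 := by omega
  have hMpow : 10 ^ (n - 2) ≤ M := by
    have h1 : 10 ^ (n-2) * 100 = 10 ^ n := by
      rw [show (100 : ℕ) = 10^2 by norm_num, ← pow_add]
      congr 1; omega
    have : 10 ^ (n-2) * 100 ≤ 10 * N := by omega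
    omega
  have hMR : (1:ℝ) ≤ (M:ℝ) := by exact_mod_cast hM1
  have hMR0 : (0:ℝ) < (M:ℝ) := by linarith
  set c : ℕ → ℝ := fun j => ((10:ℝ)^j - 1)/(2*(10:ℝ)^j) with hc
  set A : ℝ := ∑ i ∈ Finset.Icc M N, 1/(i:ℝ) with hA
  set E : ℕ → ℝ := fun j =>
    ∑ i ∈ Finset.Icc M N, (Int.fract ((i:ℝ)/10^j) - c j)/(i:ℝ) with hE
  clear_value A E
  -- expansion
  have expand : (∑ i ∈ Finset.Icc M N,
      (1 / (i:ℝ)) * ∑ j ∈ Finset.range n, Int.fract ((i:ℝ) / 10 ^ j))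
      = (∑ j ∈ range n, c j) * A + ∑ j ∈ range n, E j := by
    calc ∑ i ∈ Finset.Icc M N, (1 / (i:ℝ)) * ∑ j ∈ range n, Int.fract ((i:ℝ) / 10 ^ j)
        = ∑ i ∈ Finset.Icc M N, ∑ j ∈ range n, (1/(i:ℝ)) * Int.fract ((i:ℝ)/10^j) := by
          exact sum_congr rfl fun i _ => Finset.mul_sum _ _ _
      _ = ∑ j ∈ range n, ∑ i ∈ Finset.Icc M N, (1/(i:ℝ)) * Int.fract ((i:ℝ)/10^j) :=
          Finset.sum_comm
      _ = ∑ j ∈ range n, (c j * A + E j) := by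
          refine sum_congr rfl fun j _ => ?_
          rw [hA, Finset.mul_sum, hE]
          simp only
          rw [← Finset.sum_add_distrib]
          exact sum_congr rfl fun i _ => by ring
      _ = (∑ j ∈ range n, c j) * A + ∑ j ∈ range n, E j := by
          rw [Finset.sum_add_distrib, Finset.sum_mul]
  -- sum of c
  set s : ℝ := (1/2) * ∑ j ∈ range n, (1/10:ℝ)^j with hs
  clear_value s
  have hcsum : ∑ j ∈ range n, c j = (n:ℝ)/2 - s := by
    have hterm : ∀ j, c j = 1/2 - (1/2)*(1/10:ℝ)^j := by
      intro j
      have h10 : ((10:ℝ)^j) ≠ 0 := by positivity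
      simp only [hc]
      rw [one_div_pow]
      field_simp
    calc ∑ j ∈ range n, c j = ∑ j ∈ range n, (1/2 - (1/2)*(1/10:ℝ)^j) :=
          sum_congr rfl fun j _ => hterm j
      _ = (n:ℝ)/2 - s := by
          rw [Finset.sum_sub_distrib, Finset.sum_const, card_range, ← Finset.mul_sum, hs]
          push_cast; ring
  -- bounds on s
  have hgeo : ∑ j ∈ range n, (1/10:ℝ)^j = (1 - (1/10:ℝ)^n)/(9/10) := by
    rw [geom_sum_eq (by norm_num : (1/10:ℝ) ≠ 1)]
    rw [div_eq_div_iff (by norm_num) (by norm_num)]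
    ring
  have hs0 : 0 ≤ s := by
    rw [hs]; positivity
  have hs59 : s ≤ 5/9 := by
    rw [hs, hgeo]
    have h : (0:ℝ) ≤ (1/10:ℝ)^n := by positivity
    nlinarith
  -- bounds on A
  have hlog10 : Real.log 10 ≤ 9 := by
    have := Real.log_le_sub_one_of_pos (show (0:ℝ) < 10 by norm_num)
    linarith
  have hlog10pos : 0 < Real.log 10 := Real.log_pos (by norm_num)
  have hA_low : Real.log 10 ≤ A := by
    have h1 := harm_ge M N hM1 hMN
    have h2 : Real.log 10 + Real.log M ≤ Real.log ((N:ℝ)+1) := by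
      rw [← Real.log_mul (by norm_num) (ne_of_gt hMR0)]
      apply Real.log_le_log (by positivity)
      have : (10:ℝ) * M ≤ N := by exact_mod_cast h10M
      linarith
    rw [hA]; linarith
  have hA_up : A ≤ Real.log 10 + 2/(M:ℝ) := by
    have h1 := harm_le M N hM1 hMN
    have h2 : Real.log N ≤ Real.log 10 + Real.log M + 1/(M:ℝ) := by
      have hNle : (N:ℝ) ≤ 10*(M:ℝ) + 10 := by exact_mod_cast hN10M.le
      have heq : (10:ℝ)*(M:ℝ) + 10 = 10 * (M:ℝ) * (1 + 1/(M:ℝ)) := by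
        field_simp
      have h3 : Real.log N ≤ Real.log (10 * (M:ℝ) * (1 + 1/(M:ℝ))) := by
        apply Real.log_le_log (by positivity)
        rw [← heq]; exact hNle
      rw [Real.log_mul (by positivity) (by positivity),
          Real.log_mul (by norm_num) (ne_of_gt hMR0)] at h3
      have h4 : Real.log (1 + 1/(M:ℝ)) ≤ 1/(M:ℝ) := by
        have := Real.log_le_sub_one_of_pos (show (0:ℝ) < 1 + 1/(M:ℝ) by positivity)
        linarith
      linarith
    rw [hA]
    calc ∑ i ∈ Finset.Icc M N, 1/(i:ℝ) ≤ 1/(M:ℝ) + (Real.log N - Real.log M) := h1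
      _ ≤ 1/(M:ℝ) + (Real.log 10 + 1/(M:ℝ)) := by linarith
      _ = Real.log 10 + 2/(M:ℝ) := by ring
  have hA0 : 0 ≤ A := by
    rw [hA]; positivity
  have hA11 : A ≤ 11 := by
    have : 2/(M:ℝ) ≤ 2 := by
      rw [div_le_iff₀ hMR0]; linarith
    linarith
  have hAdiff : |A - Real.log 10| ≤ 2/(M:ℝ) := by
    rw [abs_le]
    constructor
    · have : 0 ≤ 2/(M:ℝ) := by positivity
      linarith
    · linarith
  -- bound on each E j
  have hEj : ∀ j, |E j| ≤ (10:ℝ)^j / M := by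
    intro j
    have hq : 0 < 10^j := by positivity
    have hqR : ((10^j : ℕ):ℝ) = (10:ℝ)^j := by push_cast; ring
    simp only [hE]
    apply abel_bound _ M N _ hM1 hMN
    intro k hk1 hk2
    have hrw : ∀ i : ℕ, Int.fract ((i:ℝ)/10^j) - c j
        = ((i % 10^j : ℕ):ℝ)/((10^j:ℕ):ℝ) - (((10^j:ℕ):ℝ)-1)/(2*((10^j:ℕ):ℝ)) := by
      intro i
      rw [hqR]
      simp only [hc]
      congr 1
      have := fract_nat_div i (10^j) hq
      rw [hqR] at this
      exact this
    calc |∑ i ∈ Finset.Icc M k, (Int.fract ((i:ℝ)/10^j) - c j)|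
        = |∑ i ∈ Finset.Icc M k,
            (((i % 10^j : ℕ):ℝ)/((10^j:ℕ):ℝ) - (((10^j:ℕ):ℝ)-1)/(2*((10^j:ℕ):ℝ)))| := by
          rw [sum_congr rfl fun i _ => hrw i]
      _ ≤ ((10^j:ℕ):ℝ) := partial_bound (10^j) hq M k
      _ = (10:ℝ)^j := hqR
  -- bound on T
  have hMpowR : (10:ℝ)^(n-2) ≤ (M:ℝ) := by
    have : ((10^(n-2):ℕ):ℝ) ≤ (M:ℝ) := by exact_mod_cast hMpow
    push_cast at this
    exact this
  have hT : |∑ j ∈ range n, E j| ≤ 100/9 := by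
    calc |∑ j ∈ range n, E j| ≤ ∑ j ∈ range n, |E j| := Finset.abs_sum_le_sum_abs _ _
      _ ≤ ∑ j ∈ range n, (10:ℝ)^j / M := Finset.sum_le_sum fun j _ => hEj j
      _ = (∑ j ∈ range n, (10:ℝ)^j) / M := by rw [Finset.sum_div]
      _ = (((10:ℝ)^n - 1)/9) / M := by
          rw [geom_sum_eq (by norm_num : (10:ℝ) ≠ 1)]
          norm_num
      _ ≤ ((10:ℝ)^n/9) / M := by
          gcongr
          linarith [pow_pos (show (0:ℝ) < 10 by norm_num) n]
      _ ≤ 100/9 := by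
          have hsplit : (10:ℝ)^n = (10:ℝ)^(n-2) * 100 := by
            rw [show (100:ℝ) = 10^2 by norm_num, ← pow_add]
            congr 1; omega
          have h1 : (10:ℝ)^n ≤ (M:ℝ) * 100 := by
            rw [hsplit]
            exact mul_le_mul_of_nonneg_right hMpowR (by norm_num)
          calc ((10:ℝ)^n/9)/M = (10:ℝ)^n/(9*(M:ℝ)) := by rw [div_div]
            _ ≤ ((M:ℝ)*100)/(9*(M:ℝ)) := by gcongr
            _ = 100/9 := by
                rw [mul_comm (M:ℝ) 100, mul_div_assoc, mul_comm (9:ℝ) (M:ℝ), ← div_div,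
                  div_self (ne_of_gt hMR0)]
                ring
  -- n/M ≤ 2
  have hnM : (n:ℝ) ≤ 2 * (M:ℝ) := by
    have h1 : n ≤ 2 * 10^(n-2) := by
      have := nat_le_pow (n-2)
      omega
    have h2 : (n:ℝ) ≤ 2 * ((10:ℝ)^(n-2)) := by
      have : ((2 * 10^(n-2) : ℕ):ℝ) = 2 * (10:ℝ)^(n-2) := by push_cast; ring
      rw [← this]
      exact_mod_cast h1
    linarith
  -- final assembly
  rw [expand, hcsum]
  have hkey : ((n:ℝ)/2 - s) * A + (∑ j ∈ range n, E j) - Real.log 10 / 2 * n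
      = (n:ℝ)/2 * (A - Real.log 10) - s * A + (∑ j ∈ range n, E j) := by ring
  rw [hkey]
  calc |(n:ℝ)/2 * (A - Real.log 10) - s * A + (∑ j ∈ range n, E j)|
      ≤ |(n:ℝ)/2 * (A - Real.log 10) - s * A| + |∑ j ∈ range n, E j| := abs_add_le _ _
    _ ≤ |(n:ℝ)/2 * (A - Real.log 10)| + |s * A| + |∑ j ∈ range n, E j| := by
        have := abs_sub ((n:ℝ)/2 * (A - Real.log 10)) (s * A)
        linarith
    _ ≤ (n:ℝ)/2 * (2/(M:ℝ)) + (5/9) * 11 + 100/9 := by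
        refine add_le_add (add_le_add ?_ ?_) hT
        · rw [abs_mul, abs_of_nonneg (by positivity : (0:ℝ) ≤ (n:ℝ)/2)]
          exact mul_le_mul_of_nonneg_left hAdiff (by positivity)
        · rw [abs_mul, abs_of_nonneg hs0, abs_of_nonneg hA0]
          exact mul_le_mul hs59 hA11 hA0 (by norm_num)
    _ ≤ 100 := by
        have : (n:ℝ)/2 * (2/(M:ℝ)) = (n:ℝ)/(M:ℝ) := by field_simp
        rw [this]
        have : (n:ℝ)/(M:ℝ) ≤ 2 := by
          rw [div_le_iff₀ hMR0]; linarith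
        linarith
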